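/- For every x ∈ ℝ, the RTH quasi-interpolant (L_RTH f)(x) = f₀α₀(x) + f₁α₁(x) + Σ_{j=2}^{n−2} f_jψ_j(x) + f_{n−1}α_{n−1}(x) + f_nα_n(x) equals its divided-difference form (1/2)·Σ_{j=1}^{n−1} f[x_{j−1},x_j,x_{j+1}]·(x_{j+1} − x_{j−1})·φ_j(x) + (f₀ + f_n)/2 + (1/2)·f[x₀,x₁]·(x − x₀) − (1/2)·f[x_{n−1},x_n]·(x_n − x). -/
import Mathlib


/-- RTH basis function `φ_j(t) = (t − x_j)·tanh((t − x_j)/c)`. -/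
noncomputable def rthPhi (c : ℝ) (X : ℕ → ℝ) (j : ℕ) (t : ℝ) : ℝ :=
  (t - X j) * Real.tanh ((t - X j) / c)

/-- `ψ_j(t) = (φ_{j+1}(t) − φ_j(t))/(2(x_{j+1} − x_j)) − (φ_j(t) − φ_{j−1}(t))/(2(x_j − x_{j−1}))`. -/
noncomputable def rthPsi (c : ℝ) (X : ℕ → ℝ) (j : ℕ) (t : ℝ) : ℝ :=
  (rthPhi c X (j + 1) t - rthPhi c X j t) / (2 * (X (j + 1) - X j)) -
    (rthPhi c X j t - rthPhi c X (j - 1) t) / (2 * (X j - X (j - 1)))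

/-- `α₀(t) = 1/2 + (φ₁(t) − (t − x₀))/(2(x₁ − x₀))`. -/
noncomputable def rthAlpha0 (c : ℝ) (X : ℕ → ℝ) (t : ℝ) : ℝ :=
  1 / 2 + (rthPhi c X 1 t - (t - X 0)) / (2 * (X 1 - X 0))

/-- `α₁(t) = (φ₂(t) − φ₁(t))/(2(x₂ − x₁)) − (φ₁(t) − (t − x₀))/(2(x₁ − x₀))`. -/
noncomputable def rthAlpha1 (c : ℝ) (X : ℕ → ℝ) (t : ℝ) : ℝ :=
  (rthPhi c X 2 t - rthPhi c X 1 t) / (2 * (X 2 - X 1)) -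
    (rthPhi c X 1 t - (t - X 0)) / (2 * (X 1 - X 0))

/-- `α_{n−1}(t) = ((x_n − t) − φ_{n−1}(t))/(2(x_n − x_{n−1})) − (φ_{n−1}(t) − φ_{n−2}(t))/(2(x_{n−1} − x_{n−2}))`. -/
noncomputable def rthAlphaN1 (c : ℝ) (n : ℕ) (X : ℕ → ℝ) (t : ℝ) : ℝ :=
  ((X n - t) - rthPhi c X (n - 1) t) / (2 * (X n - X (n - 1))) -
    (rthPhi c X (n - 1) t - rthPhi c X (n - 2) t) / (2 * (X (n - 1) - X (n - 2)))

/-- `α_n(t) = 1/2 + (φ_{n−1}(t) − (x_n − t))/(2(x_n − x_{n−1}))`. -/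
noncomputable def rthAlphaN (c : ℝ) (n : ℕ) (X : ℕ → ℝ) (t : ℝ) : ℝ :=
  1 / 2 + (rthPhi c X (n - 1) t - (X n - t)) / (2 * (X n - X (n - 1)))

/-- The RTH quasi-interpolant
`(L_RTH f)(t) = f₀α₀(t) + f₁α₁(t) + Σ_{j=2}^{n−2} f_jψ_j(t) + f_{n−1}α_{n−1}(t) + f_nα_n(t)`. -/
noncomputable def rthQuasiInterp (c : ℝ) (n : ℕ) (X f : ℕ → ℝ) (t : ℝ) : ℝ :=
  f 0 * rthAlpha0 c X t + f 1 * rthAlpha1 c X t +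
    (∑ j ∈ Finset.Icc 2 (n - 2), f j * rthPsi c X j t) +
    f (n - 1) * rthAlphaN1 c n X t + f n * rthAlphaN c n X t

/-- First order divided difference `f[x_i, x_{i+1}]`. -/
noncomputable def dd1 (X f : ℕ → ℝ) (i : ℕ) : ℝ :=
  (f (i + 1) - f i) / (X (i + 1) - X i)

/-- Second order divided difference `f[x_{j−1}, x_j, x_{j+1}]`. -/
noncomputable def dd2 (X f : ℕ → ℝ) (j : ℕ) : ℝ :=
  (dd1 X f j - dd1 X f (j - 1)) / (X (j + 1) - X (j - 1))


/-- Extended basis: `Φ₀ = t − x₀`, `Φ_n = x_n − t`, `Φ_j = φ_j` otherwise. -/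
noncomputable def myPhi (c : ℝ) (X : ℕ → ℝ) (k : ℕ) (t : ℝ) (j : ℕ) : ℝ :=
  if j = 0 then t - X 0 else if j = k + 4 then X (k + 4) - t else rthPhi c X j t

lemma abelA (u v : ℕ → ℝ) (m : ℕ) :
    ∑ j ∈ Finset.range (m + 1), u j * (v (j + 1) - v j)
      = u m * v (m + 1) - u 0 * v 0
        - ∑ j ∈ Finset.range m, (u (j + 1) - u j) * v (j + 1) := by
  induction m with
  | zero => simp; ring
  | succ m ih =>
    simp only [Finset.sum_range_succ] at ih ⊢
    linarith

lemma abelB (f w : ℕ → ℝ) (m : ℕ) :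
    f 0 * w 0 - f (m + 1) * w m + ∑ j ∈ Finset.range m, f (j + 1) * (w (j + 1) - w j)
      = ∑ j ∈ Finset.range (m + 1), (f j - f (j + 1)) * w j := by
  induction m with
  | zero => simp; ring
  | succ m ih =>
    simp only [Finset.sum_range_succ] at ih ⊢
    linarith

/-- For every `x ∈ ℝ`, the RTH quasi-interpolant equals its divided-difference form
`(1/2)·Σ_{j=1}^{n−1} f[x_{j−1},x_j,x_{j+1}]·(x_{j+1} − x_{j−1})·φ_j(x)
 + (f₀ + f_n)/2 + (1/2)·f[x₀,x₁]·(x − x₀) − (1/2)·f[x_{n−1},x_n]·(x_n − x)`. -/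
theorem rth_quasi_interp_divided_difference_form
    (c : ℝ) (hc : 0 < c) (n : ℕ) (hn : 4 ≤ n) (X : ℕ → ℝ)
    (hX : StrictMonoOn X (Set.Icc 0 n)) (f : ℕ → ℝ) (t : ℝ) :
    rthQuasiInterp c n X f t =
      (1 / 2) * (∑ j ∈ Finset.Icc 1 (n - 1),
          dd2 X f j * (X (j + 1) - X (j - 1)) * rthPhi c X j t) +
        (f 0 + f n) / 2 + (1 / 2) * dd1 X f 0 * (t - X 0) -
        (1 / 2) * dd1 X f (n - 1) * (X n - t) := by

  obtain ⟨k, rfl⟩ : ∃ k, n = k + 4 := ⟨n - 4, by omega⟩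
  have hlt : ∀ i j : ℕ, i < j → j ≤ k + 4 → X i < X j := by
    intro i j h1 h2
    exact hX (Set.mem_Icc.2 ⟨Nat.zero_le _, by omega⟩) (Set.mem_Icc.2 ⟨Nat.zero_le _, h2⟩) h1
  have hH : ∀ i : ℕ, i ≤ k + 3 → X (i + 1) - X i ≠ 0 := fun i hi =>
    sub_ne_zero.2 (hlt i (i + 1) (Nat.lt_succ_self i) (by omega)).ne'
  set Φ := myPhi c X k t with hΦdef
  have hΦmid : ∀ j, 1 ≤ j → j ≤ k + 3 → Φ j = rthPhi c X j t := by
    intro j h1 h2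
    simp [hΦdef, myPhi, show j ≠ 0 by omega, show j ≠ k + 4 by omega]
  have hΦ0 : Φ 0 = t - X 0 := by simp [hΦdef, myPhi]
  have hΦn : Φ (k + 4) = X (k + 4) - t := by simp [hΦdef, myPhi]
  set w : ℕ → ℝ := fun j => (Φ (j + 1) - Φ j) / (2 * (X (j + 1) - X j)) with hwdef
  have hw : ∀ j, w j = (Φ (j + 1) - Φ j) / (2 * (X (j + 1) - X j)) := fun j => rfl
  set D := dd1 X f with hDdef
  -- simplify the definitions
  have hs1 : (k + 4 : ℕ) - 1 = k + 3 := by omega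
  have hs2 : (k + 4 : ℕ) - 2 = k + 2 := by omega
  have e0 : rthAlpha0 c X t = 1 / 2 + w 0 := by
    rw [rthAlpha0, hw]
    rw [hΦmid 1 (by omega) (by omega), hΦ0]
  have e1 : rthAlpha1 c X t = w 1 - w 0 := by
    rw [rthAlpha1, hw, hw]
    rw [hΦmid 1 (by omega) (by omega), hΦmid 2 (by omega) (by omega), hΦ0]
  have eN1 : rthAlphaN1 c (k + 4) X t = w (k + 3) - w (k + 2) := by
    rw [rthAlphaN1, hs1, hs2, hw, hw]
    rw [hΦmid (k + 2) (by omega) (by omega), hΦmid (k + 3) (by omega) (by omega), hΦn]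
  have eN : rthAlphaN c (k + 4) X t = 1 / 2 - w (k + 3) := by
    rw [rthAlphaN, hs1, hw]
    rw [hΦmid (k + 3) (by omega) (by omega), hΦn]
    ring
  have epsi : ∀ i : ℕ, i ≤ k → rthPsi c X (i + 2) t = w (i + 2) - w (i + 1) := by
    intro i hi
    rw [rthPsi, hw, hw]
    have h1 : (i + 2 : ℕ) - 1 = i + 1 := by omega
    rw [h1, hΦmid (i + 1) (by omega) (by omega), hΦmid (i + 2) (by omega) (by omega),
      hΦmid (i + 3) (by omega) (by omega)]
  -- middle sum reindexed
  have hmid : (∑ j ∈ Finset.Icc 2 (k + 4 - 2), f j * rthPsi c X j t)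
      = ∑ i ∈ Finset.range (k + 1), f (i + 2) * (w (i + 2) - w (i + 1)) := by
    rw [hs2, ← Finset.Ico_add_one_right_eq_Icc, Finset.sum_Ico_eq_sum_range]
    have : k + 2 + 1 - 2 = k + 1 := by omega
    rw [this]
    refine Finset.sum_congr rfl fun i hi => ?_
    have hi' : i ≤ k := by simp at hi; omega
    rw [show 2 + i = i + 2 by omega, epsi i hi']
  -- Step 1: quasi-interpolant as Abel-type sum
  have key1 : rthQuasiInterp c (k + 4) X f t
      = (f 0 + f (k + 4)) / 2 + ∑ j ∈ Finset.range (k + 4), (f j - f (j + 1)) * w j := by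
    rw [rthQuasiInterp, e0, e1, hmid, hs1, eN1, eN]
    rw [← abelB f w (k + 3)]
    have hpeel : ∑ j ∈ Finset.range (k + 3), f (j + 1) * (w (j + 1) - w j)
        = f 1 * (w 1 - w 0) + (∑ i ∈ Finset.range (k + 1), f (i + 2) * (w (i + 2) - w (i + 1)))
          + f (k + 3) * (w (k + 3) - w (k + 2)) := by
      rw [Finset.sum_range_succ, Finset.sum_range_succ']
      simp only [add_assoc, Nat.reduceAdd, zero_add]
      ring
    rw [hpeel]; ring
  -- Step 2: each term in terms of dd1
  have key2 : ∀ j ∈ Finset.range (k + 4), (f j - f (j + 1)) * w j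
      = -(1 / 2) * (D j * (Φ (j + 1) - Φ j)) := by
    intro j hj
    have hj' : j ≤ k + 3 := by simp at hj; omega
    have hne := hH j hj'
    rw [hw, hDdef]
    simp only [dd1]
    field_simp
    ring
  -- Step 3: Abel on Φ
  have key3 : ∑ j ∈ Finset.range (k + 4), D j * (Φ (j + 1) - Φ j)
      = D (k + 3) * Φ (k + 4) - D 0 * Φ 0
        - ∑ j ∈ Finset.range (k + 3), (D (j + 1) - D j) * Φ (j + 1) :=
    abelA D Φ (k + 3)
  -- RHS sum rewriting
  have hrhs : (∑ j ∈ Finset.Icc 1 (k + 4 - 1),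
        dd2 X f j * (X (j + 1) - X (j - 1)) * rthPhi c X j t)
      = ∑ j ∈ Finset.range (k + 3), (D (j + 1) - D j) * Φ (j + 1) := by
    rw [hs1, ← Finset.Ico_add_one_right_eq_Icc, Finset.sum_Ico_eq_sum_range]
    have : k + 3 + 1 - 1 = k + 3 := by omega
    rw [this]
    refine Finset.sum_congr rfl fun i hi => ?_
    have hi' : i ≤ k + 2 := by simp at hi; omega
    have h1 : (1 + i : ℕ) = i + 1 := by omega
    have h2 : (i + 1 : ℕ) - 1 = i := by omega
    have hne : X (i + 1 + 1) - X (i + 1 - 1) ≠ 0 := by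
      rw [h2]
      exact sub_ne_zero.2 (hlt i (i + 2) (by omega) (by omega)).ne'
    rw [h1, dd2, div_mul_eq_mul_div, div_mul_eq_mul_div, div_eq_iff hne,
      hΦmid (i + 1) (by omega) (by omega), h2, hDdef]
    ring
  rw [key1, Finset.sum_congr rfl key2]
  have hpull : ∑ j ∈ Finset.range (k + 4), -(1 / 2) * (D j * (Φ (j + 1) - Φ j))
      = -(1 / 2) * ∑ j ∈ Finset.range (k + 4), D j * (Φ (j + 1) - Φ j) :=
    (Finset.mul_sum _ _ _).symm
  rw [hpull, key3, hrhs, hΦ0, hΦn, hs1]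
  ring
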